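/- Let G be a finite nilpotent group such that for every x ∈ G the co-centraliser cc_G(x) equals the set { [x,w] : w ∈ G } (i.e. the set of commutators with x is already a subgroup). Suppose g, h ∈ G satisfy ⟨g⟩^G = ⟨h⟩^G. Then there exist integers r, s and elements v, w ∈ G with g = (h^r)^v and h = (g^s)^w. -/

import Mathlib

/-!
Write `K x` for the co-centraliser of `x`: it is the smallest normal subgroup modulo which `x`
becomes central. If `⟨g⟩^G = ⟨h⟩^G`, then `g = h ^ r * c` with `c ∈ K h ≤ K g`, so
`K g ≤ K (h ^ r) ⊔ ⁅K g, ⊤⁆`. Nilpotency forces `K g ≤ K (h ^ r)`, hence `c` lies in `K (h ^ r)`,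
which by hypothesis consists of the commutators `[h ^ r, w]`, and then `g = w⁻¹ * h ^ r * w`.
-/

/-- The co-centraliser of `x` in `G`: the subgroup generated by all
commutators `[x,w] = x⁻¹ * w⁻¹ * x * w`. -/
def coCentraliser {G : Type*} [Group G] (x : G) : Subgroup G :=
  Subgroup.closure {y | ∃ w : G, y = x⁻¹ * w⁻¹ * x * w}

open Subgroup

namespace coCentraliser

variable {G : Type*} [Group G]

theorem commutator_mem (x w : G) : x⁻¹ * w⁻¹ * x * w ∈ coCentraliser x :=
  subset_closure ⟨w, rfl⟩

theorem le_iff {x : G} {H : Subgroup G} :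
    coCentraliser x ≤ H ↔ ∀ w : G, x⁻¹ * w⁻¹ * x * w ∈ H := by
  simp [coCentraliser, closure_le, Set.subset_def]

instance normal (x : G) : (coCentraliser x).Normal := by
  rw [← normalizer_eq_top_iff, eq_top_iff, coCentraliser, le_normalizer_closure_iff]
  rintro v - _ ⟨w, rfl⟩
  have hconj : v * (x⁻¹ * w⁻¹ * x * w) * v⁻¹ =
      (x⁻¹ * (v⁻¹)⁻¹ * x * v⁻¹)⁻¹ * (x⁻¹ * (w * v⁻¹)⁻¹ * x * (w * v⁻¹)) := by group
  rw [hconj]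
  exact mul_mem (inv_mem (commutator_mem x v⁻¹)) (commutator_mem x (w * v⁻¹))

theorem le_iff_mk_mem_center {x : G} {N : Subgroup G} [N.Normal] :
    coCentraliser x ≤ N ↔ (x : G ⧸ N) ∈ center (G ⧸ N) := by
  rw [le_iff, mem_center_iff, (QuotientGroup.mk_surjective (s := N)).forall]
  refine forall_congr' fun w => ?_
  rw [← QuotientGroup.eq_one_iff, show x⁻¹ * w⁻¹ * x * w = (w * x)⁻¹ * (x * w) by group,
    QuotientGroup.mk_mul, QuotientGroup.mk_inv, inv_mul_eq_one, QuotientGroup.mk_mul,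
    QuotientGroup.mk_mul]

theorem mk_mem_center (x : G) : (x : G ⧸ coCentraliser x) ∈ center (G ⧸ coCentraliser x) :=
  le_iff_mk_mem_center.mp le_rfl

theorem mul_le (x y : G) : coCentraliser (x * y) ≤ coCentraliser x ⊔ coCentraliser y :=
  le_iff_mk_mem_center.mpr <| by
    simpa using
      mul_mem (le_iff_mk_mem_center.mp le_sup_left) (le_iff_mk_mem_center.mp le_sup_right)

theorem le_commutator_top {x : G} {H : Subgroup G} (hx : x ∈ H) :
    coCentraliser x ≤ ⁅H, ⊤⁆ :=
  le_iff.mpr fun w => by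
    simpa [commutatorElement_def] using commutator_mem_commutator (inv_mem hx) (mem_top w⁻¹)

theorem le_of_mem_normalClosure {x y : G} (hy : y ∈ normalClosure {x}) :
    coCentraliser y ≤ coCentraliser x := by
  have hle : normalClosure {x} ≤ (center (G ⧸ coCentraliser x)).comap (QuotientGroup.mk' _) :=
    normalClosure_le_normal (Set.singleton_subset_iff.mpr (mk_mem_center x))
  exact le_iff_mk_mem_center.mpr (hle hy)

theorem normalClosure_singleton_le (x : G) :
    normalClosure {x} ≤ zpowers x ⊔ coCentraliser x := by
  refine closure_le _ |>.mpr ?_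
  intro y hy
  obtain ⟨_, hx, hconj⟩ := Group.mem_conjugatesOfSet_iff.mp hy
  obtain ⟨u, rfl⟩ := isConj_iff.mp (Set.mem_singleton_iff.mp hx ▸ hconj)
  rw [show u * x * u⁻¹ = x * (x⁻¹ * (u⁻¹)⁻¹ * x * u⁻¹) by group]
  exact mul_mem_sup (mem_zpowers x) (commutator_mem x u⁻¹)

theorem exists_zpow_mul_of_mem_normalClosure {x y : G} (hy : y ∈ normalClosure {x}) :
    ∃ r : ℤ, ∃ c ∈ coCentraliser x, y = x ^ r * c := by
  obtain ⟨_, ⟨r, rfl⟩, c, hc, rfl⟩ := mem_sup_of_normal_right.mp (normalClosure_singleton_le x hy)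
  exact ⟨r, c, hc, rfl⟩

end coCentraliser

namespace Subgroup

variable {G : Type*} [Group G] [Group.IsNilpotent G]

theorem eq_bot_of_le_commutator_top {H : Subgroup G} (hH : H ≤ ⁅H, ⊤⁆) : H = ⊥ := by
  obtain ⟨n, hn⟩ := nilpotent_iff_lowerCentralSeries.mp ‹Group.IsNilpotent G›
  have hle : ∀ k, H ≤ (⊤ : Subgroup G).lowerCentralSeries k := by
    intro k
    induction k with
    | zero => exact le_top
    | succ k ih => exact hH.trans (commutator_mono ih le_rfl)
  exact le_bot_iff.mp (hn ▸ hle n)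

theorem le_of_le_sup_commutator_top {H N : Subgroup G} [N.Normal] (hH : H ≤ N ⊔ ⁅H, ⊤⁆) :
    H ≤ N := by
  have hmap : H.map (QuotientGroup.mk' N) ≤ ⁅H.map (QuotientGroup.mk' N), ⊤⁆ :=
    calc H.map (QuotientGroup.mk' N)
        ≤ (N ⊔ ⁅H, ⊤⁆).map (QuotientGroup.mk' N) := map_mono hH
      _ = ⁅H.map (QuotientGroup.mk' N), (⊤ : Subgroup G).map (QuotientGroup.mk' N)⁆ := by
        rw [map_sup, map_commutator, QuotientGroup.map_mk'_self, bot_sup_eq]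
      _ ≤ ⁅H.map (QuotientGroup.mk' N), ⊤⁆ := commutator_mono le_rfl le_top
  rw [← QuotientGroup.ker_mk' N, ← map_eq_bot_iff]
  exact eq_bot_of_le_commutator_top hmap

end Subgroup

theorem exists_zpow_mul_mem_coCentraliser_zpow {G : Type*} [Group G] [Group.IsNilpotent G]
    {g h : G} (hg : g ∈ normalClosure {h}) (hh : h ∈ normalClosure {g}) :
    ∃ r : ℤ, ∃ c ∈ coCentraliser (h ^ r), g = h ^ r * c := by
  obtain ⟨r, c, hc, rfl⟩ := coCentraliser.exists_zpow_mul_of_mem_normalClosure hg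
  have hcg : c ∈ coCentraliser (h ^ r * c) := coCentraliser.le_of_mem_normalClosure hh hc
  have hle : coCentraliser (h ^ r * c) ≤ coCentraliser (h ^ r) ⊔ ⁅coCentraliser (h ^ r * c), ⊤⁆ :=
    (coCentraliser.mul_le _ _).trans (sup_le_sup_left (coCentraliser.le_commutator_top hcg) _)
  exact ⟨r, c, le_of_le_sup_commutator_top hle hcg, rfl⟩

theorem weak_magnus_of_commutator_sets_closed_general (G : Type*) [Group G]
    [Group.IsNilpotent G]
    (hcc : ∀ x : G, (coCentraliser x : Set G) = {y | ∃ w : G, y = x⁻¹ * w⁻¹ * x * w})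
    (g h : G)
    (hncl : Subgroup.normalClosure ({g} : Set G) = Subgroup.normalClosure {h}) :
    ∃ (r s : ℤ) (v w : G), g = v⁻¹ * h ^ r * v ∧ h = w⁻¹ * g ^ s * w := by
  have conj_zpow : ∀ {x y : G}, x ∈ normalClosure {y} → y ∈ normalClosure {x} →
      ∃ (r : ℤ) (v : G), x = v⁻¹ * y ^ r * v := by
    intro x y hx hy
    obtain ⟨r, c, hc, rfl⟩ := exists_zpow_mul_mem_coCentraliser_zpow hx hy
    obtain ⟨w, rfl⟩ := (hcc _).subset hc
    exact ⟨r, w, by group⟩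
  have hg : g ∈ normalClosure {h} := hncl ▸ subset_normalClosure rfl
  have hh : h ∈ normalClosure {g} := hncl ▸ subset_normalClosure rfl
  obtain ⟨r, v, hgv⟩ := conj_zpow hg hh
  obtain ⟨s, w, hhw⟩ := conj_zpow hh hg
  exact ⟨r, s, v, w, hgv, hhw⟩

theorem weak_magnus_of_commutator_sets_closed (G : Type*) [Group G]
    [Finite G] [Group.IsNilpotent G]
    (hcc : ∀ x : G, (coCentraliser x : Set G) = {y | ∃ w : G, y = x⁻¹ * w⁻¹ * x * w})
    (g h : G)
    (hncl : Subgroup.normalClosure ({g} : Set G) = Subgroup.normalClosure {h}) :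
    ∃ (r s : ℤ) (v w : G), g = v⁻¹ * h ^ r * v ∧ h = w⁻¹ * g ^ s * w :=
  weak_magnus_of_commutator_sets_closed_general G hcc g h hncl
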